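/- For every real number x ≥ 3, one has 1.431·(log₂(1 + 5·2^(x−3)) + 1.1242) ≥ x + 2. -/

import Mathlib

/-!
Write `L = log₂ (1 + 5·2^(x-3))`. Two lower bounds suffice: `L ≥ log₂ 6` because `x ≥ 3`, which
settles `x ≤ 3.2`, and `L ≥ log₂ 5 + (x - 3)`, which settles `x ≥ 3.2` because the left side then
grows with slope `1.431 > 1`. The constants `log₂ 6 ≥ 129/50` and `log₂ 5 ≥ 58/25` come from
`2^129 ≤ 6^50` and `2^58 ≤ 5^25`.
-/

open Real

lemma Real.div_le_logb_of_pow_le {b a : ℝ} {m n : ℕ} (hb : 1 < b) (ha : 0 < a) (hn : 0 < n)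
    (h : b ^ m ≤ a ^ n) : (m : ℝ) / n ≤ logb b a := by
  rw [div_le_iff₀ (by positivity), mul_comm, ← logb_pow,
    le_logb_iff_rpow_le hb (by positivity), rpow_natCast]
  exact h

lemma logb_two_six_ge : (129 : ℝ) / 50 ≤ logb 2 6 :=
  mod_cast div_le_logb_of_pow_le (m := 129) (n := 50) one_lt_two (by norm_num) (by norm_num)
    (by norm_num)

lemma logb_two_five_ge : (58 : ℝ) / 25 ≤ logb 2 5 :=
  mod_cast div_le_logb_of_pow_le (m := 58) (n := 25) one_lt_two (by norm_num) (by norm_num)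
    (by norm_num)

lemma logb_two_six_le_logb_one_add_five_mul_rpow {x : ℝ} (hx : 3 ≤ x) :
    logb 2 6 ≤ logb 2 (1 + 5 * (2 : ℝ) ^ (x - 3)) := by
  have : 1 ≤ (2 : ℝ) ^ (x - 3) := one_le_rpow (by norm_num) (by linarith)
  exact logb_le_logb_of_le one_lt_two (by norm_num) (by linarith)

lemma logb_two_five_add_le_logb_one_add_five_mul_rpow (x : ℝ) :
    logb 2 5 + (x - 3) ≤ logb 2 (1 + 5 * (2 : ℝ) ^ (x - 3)) := by
  have hpos : 0 < 5 * (2 : ℝ) ^ (x - 3) := by positivity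
  calc logb 2 5 + (x - 3) = logb 2 (5 * (2 : ℝ) ^ (x - 3)) := by
        rw [logb_mul (by norm_num) (by positivity), logb_rpow two_pos (by norm_num)]
    _ ≤ logb 2 (1 + 5 * (2 : ℝ) ^ (x - 3)) :=
        logb_le_logb_of_le one_lt_two hpos (by linarith)

theorem stmt_11 (x : ℝ) (hx : 3 ≤ x) :
    1.431 * (Real.logb 2 (1 + 5 * (2 : ℝ) ^ (x - 3)) + 1.1242) ≥ x + 2 := by
  rcases le_or_gt x 3.2 with hsmall | hlarge
  · linarith [logb_two_six_le_logb_one_add_five_mul_rpow hx, logb_two_six_ge]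
  · linarith [logb_two_five_add_le_logb_one_add_five_mul_rpow x, logb_two_five_ge]
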